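/- For all r ≥ 1 and n sufficiently large, ℓ_n(3,2,r) = (1/4)((r+1)^2 − 1_{r even}): the minimum size of a contagious set of pairs for bootstrap percolation on K_n^3 with threshold r is exactly ⌈(r+1)^2/4⌉ adjusted by parity, i.e., ((r+1)^2 − [r even])/4. -/

import Mathlib

open Finset

open Classical in
noncomputable def bootStep (V : Finset ℕ) (E : Finset (Finset ℕ)) (j r : ℕ)
    (A : Finset (Finset ℕ)) : Finset (Finset ℕ) :=
  A ∪ (V.powersetCard j).filter (fun J =>
    ∃ K : Fin r → Finset ℕ, ∃ Js : Fin r → Finset ℕ,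
      Function.Injective K ∧ Function.Injective Js ∧
      ∀ i : Fin r, K i ∈ E ∧ Js i ∈ A ∧ Js i ∪ J ⊆ K i)

/-- The infected sets at time `t` of the bootstrap percolation process on a hypergraph
with vertex set `V`, edge set `E`, evolving on `j`-sets with infection threshold `r`. -/
noncomputable def bootProc (V : Finset ℕ) (E : Finset (Finset ℕ)) (j r : ℕ)
    (A0 : Finset (Finset ℕ)) (t : ℕ) : Finset (Finset ℕ) :=
  (bootStep V E j r)^[t] A0

/-- The process on the complete `k`-uniform hypergraph on `V`. -/
noncomputable def compProc (V : Finset ℕ) (k j r : ℕ)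
    (A0 : Finset (Finset ℕ)) (t : ℕ) : Finset (Finset ℕ) :=
  bootProc V (V.powersetCard k) j r A0 t

/-- `A0` is contagious: eventually all `j`-sets of `V` are infected. -/
def Percolates (V : Finset ℕ) (k j r : ℕ) (A0 : Finset (Finset ℕ)) : Prop :=
  ∃ t, compProc V k j r A0 t = V.powersetCard j

/-- `ℓ_n(k,j,r)`: minimum size of a contagious `j`-configuration in `K_n^k`. -/
noncomputable def ellMin (n k j r : ℕ) : ℕ :=
  sInf {m | ∃ A0 : Finset (Finset ℕ), A0 ⊆ (range n).powersetCard j ∧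
    A0.card = m ∧ Percolates (range n) k j r A0}

open Classical in
/-- The extension set of a `(k-1)`-set `J` with respect to configuration `C` in the
complete `k`-uniform hypergraph on `V`. -/
noncomputable def extSet (V : Finset ℕ) (k : ℕ) (C : Finset (Finset ℕ))
    (J : Finset ℕ) : Finset ℕ :=
  V.filter (fun v => ∃ J' ∈ C, J' ≠ J ∧ J' ⊆ insert v J ∧ insert v J ∈ V.powersetCard k)

/-!
A pair `J` becomes infected exactly when at least `r` vertices `w ∉ J` are joined to `J` by an
infected pair `{w, u}` with `u ∈ J`.

Upper bound: two disjoint cliques of pairs on `⌊(r + 2)/2⌋` and `⌈(r + 2)/2⌉` vertices have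
`⌊(r + 1)²/4⌋` pairs, and they infect every pair inside their union `S` (of `r + 2` vertices) in
one round, every pair meeting `S` in the next round, and every pair in the third.

Lower bound, by induction on `r` in steps of two: a pair `J` infected in the first round needs `r`
initial pairs meeting `J`, while the initial pairs avoiding `J` are contagious on the remaining
vertices with threshold `r - 2`. As `⌊(r + 1)²/4⌋ = ⌊(r - 1)²/4⌋ + r`, the bound follows.
-/

section Infection

variable {V : Finset ℕ} {E : Finset (Finset ℕ)} {k j r : ℕ} {A A0 : Finset (Finset ℕ)}

lemma subset_bootStep : A ⊆ bootStep V E j r A := subset_union_left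

lemma bootStep_subset_powersetCard (hA : A ⊆ V.powersetCard j) :
    bootStep V E j r A ⊆ V.powersetCard j := by
  classical exact union_subset hA (filter_subset _ _)

lemma compProc_succ (t : ℕ) :
    compProc V k j r A0 (t + 1) = bootStep V (V.powersetCard k) j r (compProc V k j r A0 t) :=
  Function.iterate_succ_apply' _ _ _

lemma compProc_subset_powersetCard (hA0 : A0 ⊆ V.powersetCard j) (t : ℕ) :
    compProc V k j r A0 t ⊆ V.powersetCard j := by
  induction t with
  | zero => exact hA0
  | succ t ih => rw [compProc_succ]; exact bootStep_subset_powersetCard ih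

lemma percolates_of_powersetCard_subset (hA0 : A0 ⊆ V.powersetCard j) {t : ℕ}
    (h : V.powersetCard j ⊆ compProc V k j r A0 t) : Percolates V k j r A0 :=
  ⟨t, (compProc_subset_powersetCard hA0 t).antisymm h⟩

lemma Percolates.eq_powersetCard_of_bootStep_eq (h : Percolates V k j r A0)
    (hfix : bootStep V (V.powersetCard k) j r A0 = A0) : A0 = V.powersetCard j := by
  obtain ⟨t, ht⟩ := h
  rwa [compProc, bootProc, Function.iterate_fixed hfix] at ht

end Infection

section ExtSet

variable {V S T J : Finset ℕ} {k r : ℕ} {A B : Finset (Finset ℕ)} {w : ℕ}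

lemma pair_mem_powersetCard {X : Finset ℕ} {u : ℕ} (hwu : w ≠ u) (hw : w ∈ X) (hu : u ∈ X) :
    {w, u} ∈ X.powersetCard 2 :=
  mem_powersetCard.2 ⟨insert_subset hw (singleton_subset_iff.2 hu), card_pair hwu⟩

lemma extSet_mono (h : A ⊆ B) : extSet V k A J ⊆ extSet V k B J := by
  intro v hv
  simp only [extSet, mem_filter] at hv ⊢
  obtain ⟨hvV, J', hJ'A, hJ'⟩ := hv
  exact ⟨hvV, J', h hJ'A, hJ'⟩

lemma extSet_sdiff_subset (hJT : Disjoint J T) :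
    extSet V k A J \ T ⊆ extSet (V \ T) k (A.filter (Disjoint · T)) J := by
  intro v hv
  simp only [extSet, mem_sdiff, mem_filter, mem_powersetCard] at hv ⊢
  obtain ⟨⟨hvV, J', hJ'A, hJ'J, hJ'v, hvJV, hcard⟩, hvT⟩ := hv
  have hvJT : Disjoint (insert v J) T := disjoint_insert_left.2 ⟨hvT, hJT⟩
  exact ⟨⟨hvV, hvT⟩, J', ⟨hJ'A, hvJT.mono_left hJ'v⟩, hJ'J, hJ'v,
    subset_sdiff.2 ⟨hvJV, hvJT⟩, hcard⟩

lemma mem_extSet_iff (hA : A ⊆ V.powersetCard 2) (hJ : J ∈ V.powersetCard 2) :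
    w ∈ extSet V 3 A J ↔ w ∈ V ∧ w ∉ J ∧ ∃ u ∈ J, {w, u} ∈ A := by
  obtain ⟨hJV, hJ2⟩ := mem_powersetCard.1 hJ
  simp only [extSet, mem_filter, mem_powersetCard]
  constructor
  · rintro ⟨hwV, J', hJ'A, hJ'J, hJ'w, -, hcard⟩
    have hwJ : w ∉ J := fun h => by rw [insert_eq_of_mem h] at hcard; omega
    have hJ'2 : #J' = 2 := (mem_powersetCard.1 (hA hJ'A)).2
    have hwJ' : w ∈ J' := by
      by_contra hw
      refine hJ'J (eq_of_subset_of_card_le (fun z hz => ?_) (by rw [hJ2, hJ'2]))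
      exact (mem_insert.1 (hJ'w hz)).resolve_left (by rintro rfl; exact hw hz)
    obtain ⟨u, hu⟩ := card_eq_one.1 (by rw [card_erase_of_mem hwJ', hJ'2] : #(J'.erase w) = 1)
    have huJ' : u ∈ J'.erase w := hu ▸ mem_singleton_self u
    refine ⟨hwV, hwJ, u, ?_, ?_⟩
    · exact (mem_insert.1 (hJ'w (mem_of_mem_erase huJ'))).resolve_left (ne_of_mem_erase huJ')
    · rwa [← hu, insert_erase hwJ']
  · rintro ⟨hwV, hwJ, u, hu, hwuA⟩
    refine ⟨hwV, {w, u}, hwuA, fun h => hwJ (h ▸ mem_insert_self w {u}),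
      insert_subset_insert w (singleton_subset_iff.2 hu), insert_subset hwV hJV, ?_⟩
    rw [card_insert_of_notMem hwJ, hJ2]

lemma mem_bootStep_iff (hA : A ⊆ V.powersetCard 2) (hJ : J ∈ V.powersetCard 2) :
    J ∈ bootStep V (V.powersetCard 3) 2 r A ↔ J ∈ A ∨ r ≤ #(extSet V 3 A J) := by
  simp only [bootStep, mem_union, mem_filter, hJ, true_and]
  refine or_congr_right' fun hJA => ⟨?_, fun hr => ?_⟩
  · rintro ⟨K, Js, hK, -, hKJs⟩
    have hext : ∀ i, ∃ w ∉ J, insert w J = K i := fun i => exists_eq_insert_iff.2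
      ⟨(union_subset_iff.1 (hKJs i).2.2).2, by
        rw [(mem_powersetCard.1 hJ).2, (mem_powersetCard.1 (hKJs i).1).2]⟩
    choose w hwJ hwK using hext
    calc r = #(univ : Finset (Fin r)) := (card_fin r).symm
      _ ≤ #(extSet V 3 A J) := card_le_card_of_injOn w (fun i _ => ?_)
          (fun i _ i' _ h => hK (by rw [← hwK, ← hwK, h]))
    simp only [coe_filter, extSet, Set.mem_ofPred_eq]
    have hKi := hKJs i
    rw [← hwK] at hKi
    refine ⟨(mem_powersetCard.1 hKi.1).1 (mem_insert_self _ _), Js i, hKi.2.1,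
      fun h => hJA (h ▸ hKi.2.1), (union_subset_iff.1 hKi.2.2).1, hKi.1⟩
  · let e : Fin r ↪ extSet V 3 A J :=
      (Fin.castLEEmb hr).trans (extSet V 3 A J).equivFin.symm.toEmbedding
    have hext := fun i => (mem_extSet_iff hA hJ).1 (e i).2
    choose hwV hwJ u hu huA using hext
    have hinj : ∀ i i', ((e i : ℕ)) ∈ insert (e i' : ℕ) J → i = i' := fun i i' h =>
      e.injective (Subtype.ext ((mem_insert.1 h).resolve_right (hwJ i)))
    refine ⟨fun i => insert (e i : ℕ) J, fun i => {(e i : ℕ), u i},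
      fun i i' h => hinj i i' ((show insert (e i : ℕ) J = insert (e i' : ℕ) J from h) ▸
        mem_insert_self _ _), fun i i' h => hinj i i' ?_,
      fun i => ⟨?_, huA i, ?_⟩⟩
    · have h' := insert_subset_insert (e i' : ℕ) (singleton_subset_iff.2 (hu i'))
      exact h' ((show ({(e i : ℕ), u i} : Finset ℕ) = {(e i' : ℕ), u i'} from h) ▸
        mem_insert_self _ _)
    · rw [mem_powersetCard, card_insert_of_notMem (hwJ i), (mem_powersetCard.1 hJ).2]
      exact ⟨insert_subset (hwV i) (mem_powersetCard.1 hJ).1, rfl⟩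
    · exact union_subset (insert_subset_insert _ (singleton_subset_iff.2 (hu i)))
        (subset_insert _ _)

lemma mem_bootStep_of_le_card_sdiff (hA : A ⊆ V.powersetCard 2) (hJ : J ∈ V.powersetCard 2)
    (hS : S ⊆ V) (hr : r + 2 ≤ #S) (h : ∀ w ∈ S, w ∉ J → ∃ u ∈ J, {w, u} ∈ A) :
    J ∈ bootStep V (V.powersetCard 3) 2 r A := by
  refine (mem_bootStep_iff hA hJ).2 (Or.inr ?_)
  have hsdiff := le_card_sdiff J S
  rw [(mem_powersetCard.1 hJ).2] at hsdiff
  refine (show r ≤ #(S \ J) by omega).trans (card_le_card fun w hw => ?_)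
  obtain ⟨hwS, hwJ⟩ := mem_sdiff.1 hw
  exact (mem_extSet_iff hA hJ).2 ⟨hS hwS, hwJ, h w hwS hwJ⟩

lemma card_extSet_le_card_filter (hA : A ⊆ V.powersetCard 2) (hJ : J ∈ V.powersetCard 2) :
    #(extSet V 3 A J) ≤ #(A.filter fun e => ¬Disjoint e J) := by
  refine card_le_card_of_forall_subsingleton (fun w e => ∃ u ∈ J, e = {w, u}) ?_ ?_
  · intro w hw
    obtain ⟨-, -, u, hu, hwuA⟩ := (mem_extSet_iff hA hJ).1 hw
    exact ⟨{w, u}, mem_filter.2 ⟨hwuA, not_disjoint_iff.2 ⟨u, by simp, hu⟩⟩, u, hu, rfl⟩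
  · rintro e - w ⟨hw, u, hu, rfl⟩ w' ⟨hw', u', hu', he⟩
    have hw'J := ((mem_extSet_iff hA hJ).1 hw').2.1
    have : w' ∈ ({w, u} : Finset ℕ) := he ▸ mem_insert_self w' {u'}
    rcases mem_insert.1 this with h | h
    · exact h.symm
    · exact absurd (mem_singleton.1 h ▸ hu) hw'J

end ExtSet

section Restriction

variable {V T : Finset ℕ} {j r : ℕ} {A0 : Finset (Finset ℕ)}

lemma filter_disjoint_powersetCard :
    (V.powersetCard j).filter (Disjoint · T) = (V \ T).powersetCard j := by
  ext e
  simp only [mem_filter, mem_powersetCard, subset_sdiff]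
  tauto

lemma filter_disjoint_subset_powersetCard_sdiff (hA0 : A0 ⊆ V.powersetCard j) :
    A0.filter (Disjoint · T) ⊆ (V \ T).powersetCard j :=
  filter_disjoint_powersetCard (T := T) ▸ filter_subset_filter _ hA0

/-- Deleting a set `T` of vertices costs each pair avoiding `T` at most `#T` of its extensions. -/
lemma filter_compProc_subset_compProc_sdiff (hA0 : A0 ⊆ V.powersetCard 2) (t : ℕ) :
    (compProc V 3 2 r A0 t).filter (Disjoint · T) ⊆
      compProc (V \ T) 3 2 (r - #T) (A0.filter (Disjoint · T)) t := by
  induction t with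
  | zero => exact Subset.rfl
  | succ t ih =>
    intro J hJ
    obtain ⟨hJt, hJT⟩ := mem_filter.1 hJ
    have hAt := compProc_subset_powersetCard (k := 3) (r := r) hA0 t
    have hBt := compProc_subset_powersetCard (k := 3) (r := r - #T)
      (filter_disjoint_subset_powersetCard_sdiff (T := T) hA0) t
    have hJV : J ∈ V.powersetCard 2 := compProc_subset_powersetCard hA0 (t + 1) hJt
    have hJVT : J ∈ (V \ T).powersetCard 2 :=
      filter_disjoint_powersetCard (T := T) ▸ mem_filter.2 ⟨hJV, hJT⟩
    rw [compProc_succ] at hJt ⊢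
    rw [mem_bootStep_iff hBt hJVT]
    rcases (mem_bootStep_iff hAt hJV).1 hJt with hJA | hr
    · exact Or.inl (ih (mem_filter.2 ⟨hJA, hJT⟩))
    · refine Or.inr ?_
      calc r - #T ≤ #(extSet V 3 (compProc V 3 2 r A0 t) J) - #T := Nat.sub_le_sub_right hr _
        _ ≤ #(extSet V 3 (compProc V 3 2 r A0 t) J \ T) := le_card_sdiff _ _
        _ ≤ _ := card_le_card ((extSet_sdiff_subset hJT).trans (extSet_mono ih))

lemma Percolates.filter_disjoint (hA0 : A0 ⊆ V.powersetCard 2) (h : Percolates V 3 2 r A0) :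
    Percolates (V \ T) 3 2 (r - #T) (A0.filter (Disjoint · T)) := by
  obtain ⟨t, ht⟩ := h
  refine percolates_of_powersetCard_subset (filter_disjoint_subset_powersetCard_sdiff hA0)
    (t := t) ?_
  rw [← filter_disjoint_powersetCard, ← ht]
  exact filter_compProc_subset_compProc_sdiff hA0 t

end Restriction

section Arithmetic

lemma two_mul_choose_two_add_one (s : ℕ) : 2 * (s + 1).choose 2 = (s + 1) * s := by
  rw [Nat.choose_two_right, Nat.add_sub_cancel]
  exact Nat.mul_div_cancel' (even_iff_two_dvd.1 (mul_comm s (s + 1) ▸ Nat.even_mul_succ_self s))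

lemma two_mul_add_one_sq_div_four (s : ℕ) : (2 * s + 1) ^ 2 / 4 = (s + 1) * s := by
  rw [show (2 * s + 1) ^ 2 = 1 + 4 * ((s + 1) * s) by ring, Nat.add_mul_div_left _ _ (by norm_num)]
  simp

lemma two_mul_add_two_sq_div_four (s : ℕ) : (2 * s + 2) ^ 2 / 4 = (s + 1) ^ 2 := by
  rw [show (2 * s + 2) ^ 2 = 4 * (s + 1) ^ 2 by ring, Nat.mul_div_cancel_left _ (by norm_num)]

lemma choose_two_add_choose_two_half (r : ℕ) :
    ((r + 2) / 2).choose 2 + (r + 2 - (r + 2) / 2).choose 2 = (r + 1) ^ 2 / 4 := by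
  obtain ⟨s, rfl | rfl⟩ := Nat.even_or_odd' r
  · rw [show (2 * s + 2) / 2 = s + 1 by omega, show 2 * s + 2 - (s + 1) = s + 1 by omega,
      two_mul_add_one_sq_div_four]
    have := two_mul_choose_two_add_one s
    omega
  · rw [show (2 * s + 1 + 2) / 2 = s + 1 by omega,
      show 2 * s + 1 + 2 - (s + 1) = s + 1 + 1 by omega, two_mul_add_two_sq_div_four]
    have := two_mul_choose_two_add_one s
    have := two_mul_choose_two_add_one (s + 1)
    have : (s + 1) * s + (s + 1 + 1) * (s + 1) = 2 * (s + 1) ^ 2 := by ring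
    omega

lemma add_one_sq_div_four_le_choose_two (r : ℕ) : (r + 1) ^ 2 / 4 ≤ (r + 1).choose 2 := by
  have := two_mul_choose_two_add_one r
  have : (r + 1) ^ 2 / 4 * 4 ≤ (r + 1) ^ 2 := Nat.div_mul_le_self _ _
  nlinarith

lemma add_three_sq_div_four (m : ℕ) : (m + 3) ^ 2 / 4 = (m + 1) ^ 2 / 4 + (m + 2) := by
  rw [show (m + 3) ^ 2 = (m + 1) ^ 2 + 4 * (m + 2) by ring, Nat.add_mul_div_left _ _ (by norm_num)]

lemma four_mul_add_one_sq_div_four (r : ℕ) :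
    4 * ((r + 1) ^ 2 / 4) = (r + 1) ^ 2 - if Even r then 1 else 0 := by
  obtain ⟨s, rfl | rfl⟩ := Nat.even_or_odd' r
  · rw [two_mul_add_one_sq_div_four, if_pos (even_two_mul s),
      show (2 * s + 1) ^ 2 = 1 + 4 * ((s + 1) * s) by ring]
    omega
  · rw [two_mul_add_two_sq_div_four, if_neg (Nat.not_even_iff_odd.2 (odd_two_mul_add_one s)),
      show (2 * s + 1 + 1) ^ 2 = 4 * (s + 1) ^ 2 by ring]
    rfl

end Arithmetic

section UpperBound

variable {a b n r : ℕ}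

def twoCliques (a b : ℕ) : Finset (Finset ℕ) :=
  (range a).powersetCard 2 ∪ (Ico a b).powersetCard 2

lemma card_twoCliques : #(twoCliques a b) = a.choose 2 + (b - a).choose 2 := by
  have hdisj : Disjoint ((range a).powersetCard 2) ((Ico a b).powersetCard 2) := by
    refine disjoint_left.2 fun e he he' => ?_
    obtain ⟨z, hz⟩ := card_pos.1 (by rw [(mem_powersetCard.1 he).2]; norm_num : 0 < #e)
    have := mem_range.1 ((mem_powersetCard.1 he).1 hz)
    have := (mem_Ico.1 ((mem_powersetCard.1 he').1 hz)).1
    omega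
  rw [twoCliques, card_union_of_disjoint hdisj, card_powersetCard, card_powersetCard, card_range,
    Nat.card_Ico]

lemma twoCliques_subset_powersetCard (hab : a ≤ b) (hbn : b ≤ n) :
    twoCliques a b ⊆ (range n).powersetCard 2 := by
  refine union_subset (powersetCard_mono fun z hz => ?_) (powersetCard_mono fun z hz => ?_)
  · exact mem_range.2 ((mem_range.1 hz).trans_le (hab.trans hbn))
  · exact mem_range.2 ((mem_Ico.1 hz).2.trans_le hbn)

lemma powersetCard_range_subset_bootStep_twoCliques (hab : a ≤ b) (hbn : b ≤ n)
    (hrb : r + 2 ≤ b) :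
    (range b).powersetCard 2 ⊆
      bootStep (range n) ((range n).powersetCard 3) 2 r (twoCliques a b) := by
  intro J hJ
  obtain ⟨hJb, hJ2⟩ := mem_powersetCard.1 hJ
  by_cases hJa : J ⊆ range a
  · exact subset_bootStep (mem_union_left _ (mem_powersetCard.2 ⟨hJa, hJ2⟩))
  by_cases hJab : J ⊆ Ico a b
  · exact subset_bootStep (mem_union_right _ (mem_powersetCard.2 ⟨hJab, hJ2⟩))
  obtain ⟨x, hxJ, hx⟩ := not_subset.1 hJab
  obtain ⟨y, hyJ, hy⟩ := not_subset.1 hJa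
  have hxa : x < a := by
    have := mem_range.1 (hJb hxJ); rw [mem_Ico] at hx; omega
  have hay : a ≤ y := by rw [mem_range] at hy; omega
  refine mem_bootStep_of_le_card_sdiff (twoCliques_subset_powersetCard hab hbn)
    (powersetCard_mono (range_subset_range.2 hbn) hJ) (range_subset_range.2 hbn)
    (by rwa [card_range]) fun w hw hwJ => ?_
  have hwb := mem_range.1 hw
  rcases lt_or_ge w a with hwa | haw
  · refine ⟨x, hxJ, mem_union_left _
      (pair_mem_powersetCard ?_ (mem_range.2 hwa) (mem_range.2 hxa))⟩
    rintro rfl; exact hwJ hxJ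
  · refine ⟨y, hyJ, mem_union_right _ (pair_mem_powersetCard ?_ (mem_Ico.2 ⟨haw, hwb⟩)
      (mem_Ico.2 ⟨hay, mem_range.1 (hJb hyJ)⟩))⟩
    rintro rfl; exact hwJ hyJ

lemma percolates_twoCliques (hab : a ≤ b) (hbn : b ≤ n) (hrb : r + 2 ≤ b) :
    Percolates (range n) 3 2 r (twoCliques a b) := by
  have hA0 := twoCliques_subset_powersetCard hab hbn
  have hS : range b ⊆ range n := range_subset_range.2 hbn
  have hrS : r + 2 ≤ #(range b) := by rwa [card_range]
  have h2 : ∀ J ∈ (range n).powersetCard 2, ∀ u ∈ J, u < b →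
      J ∈ compProc (range n) 3 2 r (twoCliques a b) (1 + 1) := by
    intro J hJ u hu hub
    rw [compProc_succ]
    refine mem_bootStep_of_le_card_sdiff (compProc_subset_powersetCard hA0 1) hJ hS hrS
      fun w hw hwJ => ⟨u, hu, ?_⟩
    refine powersetCard_range_subset_bootStep_twoCliques hab hbn hrb ?_
    exact pair_mem_powersetCard (by rintro rfl; exact hwJ hu) hw (mem_range.2 hub)
  refine percolates_of_powersetCard_subset hA0 (t := 2 + 1) fun J hJ => ?_
  obtain ⟨u, hu⟩ := card_pos.1 (by rw [(mem_powersetCard.1 hJ).2]; norm_num : 0 < #J)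
  rw [compProc_succ]
  refine mem_bootStep_of_le_card_sdiff (compProc_subset_powersetCard hA0 2) hJ hS hrS
    fun w hw hwJ => ⟨u, hu, h2 _ ?_ w (mem_insert_self _ _) (mem_range.1 hw)⟩
  exact pair_mem_powersetCard (by rintro rfl; exact hwJ hu) (hS hw) ((mem_powersetCard.1 hJ).1 hu)

end UpperBound

theorem add_one_sq_div_four_le_card_of_percolates (r : ℕ) {V : Finset ℕ}
    {A0 : Finset (Finset ℕ)} (hV : r + 1 ≤ #V) (hA0 : A0 ⊆ V.powersetCard 2)
    (h : Percolates V 3 2 r A0) :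
    (r + 1) ^ 2 / 4 ≤ #A0 := by
  induction r using Nat.strong_induction_on generalizing V A0 with
  | _ r ih =>
  by_cases hfix : bootStep V (V.powersetCard 3) 2 r A0 = A0
  · rw [h.eq_powersetCard_of_bootStep_eq hfix, card_powersetCard]
    exact (add_one_sq_div_four_le_choose_two r).trans (Nat.choose_le_choose 2 hV)
  obtain ⟨J, hJ, hJA0⟩ := exists_of_ssubset (subset_bootStep.ssubset_of_ne (Ne.symm hfix))
  have hJV : J ∈ V.powersetCard 2 := bootStep_subset_powersetCard hA0 hJ
  have hmeet : r ≤ #(A0.filter fun e => ¬Disjoint e J) :=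
    (((mem_bootStep_iff hA0 hJV).1 hJ).resolve_left hJA0).trans
      (card_extSet_le_card_filter hA0 hJV)
  have hsplit := card_filter_add_card_filter_not (s := A0) (fun e => Disjoint e J)
  rcases lt_or_ge r 2 with hr | hr
  · have : (r + 1) ^ 2 / 4 ≤ r := by interval_cases r <;> rfl
    omega
  obtain ⟨m, rfl⟩ := Nat.exists_eq_add_of_le' hr
  obtain ⟨hJsub, hJ2⟩ := mem_powersetCard.1 hJV
  have hrest := ih m (by omega) (V := V \ J) (by rw [card_sdiff_of_subset hJsub]; omega)
    (filter_disjoint_subset_powersetCard_sdiff hA0)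
    (by simpa [hJ2] using h.filter_disjoint (T := J) hA0)
  rw [show m + 2 + 1 = m + 3 by rfl, add_three_sq_div_four]
  omega

lemma ellMin_three_two {n r : ℕ} (hn : r + 2 ≤ n) : ellMin n 3 2 r = (r + 1) ^ 2 / 4 := by
  have hmem : (r + 1) ^ 2 / 4 ∈ {m | ∃ A0 : Finset (Finset ℕ), A0 ⊆ (range n).powersetCard 2 ∧
      #A0 = m ∧ Percolates (range n) 3 2 r A0} :=
    ⟨twoCliques ((r + 2) / 2) (r + 2), twoCliques_subset_powersetCard (by omega) hn,
      card_twoCliques.trans (choose_two_add_choose_two_half r),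
      percolates_twoCliques (by omega) hn le_rfl⟩
  refine le_antisymm (Nat.sInf_le hmem) (le_csInf ⟨_, hmem⟩ ?_)
  rintro m ⟨A0, hA0, rfl, hperc⟩
  exact add_one_sq_div_four_le_card_of_percolates r (by rw [card_range]; omega) hA0 hperc

theorem stmt15_general (r : ℕ) :
    ∃ n0, ∀ n ≥ n0,
      4 * ellMin n 3 2 r = (r + 1) ^ 2 - (if Even r then 1 else 0) :=
  ⟨r + 2, fun _ hn => by rw [ellMin_three_two hn, four_mul_add_one_sq_div_four]⟩

theorem stmt15 (r : ℕ) (hr : 1 ≤ r) :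
    ∃ n0, ∀ n ≥ n0,
      4 * ellMin n 3 2 r = (r + 1) ^ 2 - (if Even r then 1 else 0) :=
  stmt15_general r
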